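/- In the system axiomatized by (β), (η), reflexivity and the rule of replacement of equals (without assuming α-conversion), the equality of α-conversion is derivable: for any term a, variable x, and variable y of the same type as x not occurring in a, the equality λx.a = λy.(a[y/x]) is provable. -/
import Mathlib


set_option autoImplicit false

/-- Simple types over a set `ν` of atomic types. -/
inductive Ty (ν : Type) : Type
  | atom : ν → Ty ν
  | arrow : Ty ν → Ty ν → Ty ν
deriving DecidableEq

/-- Terms of the simply typed lambda calculus Λ with named variables: a variable is a
pair of a name (a natural number) and a type, so that there are infinitely many
variables of each type; `NTm A` are the terms of type `A`. -/
inductive NTm {ν : Type} : Ty ν → Type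
  | var (n : ℕ) (A : Ty ν) : NTm A
  | app {A B : Ty ν} : NTm (Ty.arrow A B) → NTm A → NTm B
  | lam (n : ℕ) (A : Ty ν) {B : Ty ν} : NTm B → NTm (Ty.arrow A B)

/-- `Free n A a` : the variable `(n, A)` occurs free in the term `a`. -/
def Free {ν : Type} (n : ℕ) (A : Ty ν) : ∀ {B : Ty ν}, NTm B → Prop
  | _, .var m C => m = n ∧ C = A
  | _, .app f a => Free n A f ∨ Free n A a
  | _, .lam m C b => ¬ (m = n ∧ C = A) ∧ Free n A b

/-- `Occurs n A a` : the variable `(n, A)` occurs (free or bound, including in binding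
position) in the term `a`. -/
def Occurs {ν : Type} (n : ℕ) (A : Ty ν) : ∀ {B : Ty ν}, NTm B → Prop
  | _, .var m C => m = n ∧ C = A
  | _, .app f a => Occurs n A f ∨ Occurs n A a
  | _, .lam m C b => (m = n ∧ C = A) ∨ Occurs n A b

/-- Literal substitution `a[b/x]` of the term `b` for the free occurrences of the
variable `x = (n, A)` in `a` (no renaming of bound variables is performed). -/
def NTm.substVar {ν : Type} [DecidableEq ν] {A : Ty ν} (b : NTm A) (n : ℕ) :
    ∀ {B : Ty ν}, NTm B → NTm B
  | _, .var m C =>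
      if h : m = n ∧ C = A then h.2 ▸ b else .var m C
  | _, .app f a => .app (NTm.substVar b n f) (NTm.substVar b n a)
  | _, .lam m C a =>
      if m = n ∧ C = A then .lam m C a else .lam m C (NTm.substVar b n a)

/-- `FreeFor b n A a` : the term `b` is free for the variable `(n, A)` in `a`, i.e. no
free occurrence of `(n, A)` in `a` lies within the scope of a binder that binds a
variable free in `b`. -/
def FreeFor {ν : Type} {A : Ty ν} (b : NTm A) (n : ℕ) : ∀ {B : Ty ν}, NTm B → Prop
  | _, .var _ _ => True
  | _, .app f a => FreeFor b n f ∧ FreeFor b n a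
  | _, .lam m C a => ¬ Free n A (NTm.lam m C a) ∨ (¬ Free m C b ∧ FreeFor b n a)

/-- The theory of βη-equality, axiomatized by (β) (with the proviso that `b` is free
for `x` in `a`), (η) (with the proviso that `x` is not free in `a`), the axiom `a = a`
and the rule of replacement of equals — without assuming α-conversion. -/
inductive NEq {ν : Type} [DecidableEq ν] : ∀ {A : Ty ν}, NTm A → NTm A → Prop
  | refl {A : Ty ν} (a : NTm A) : NEq a a
  | symm {A : Ty ν} {a b : NTm A} : NEq a b → NEq b a
  | trans {A : Ty ν} {a b c : NTm A} : NEq a b → NEq b c → NEq a c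
  | congApp {A B : Ty ν} {f g : NTm (Ty.arrow A B)} {a b : NTm A} :
      NEq f g → NEq a b → NEq (.app f a) (.app g b)
  | congLam {A B : Ty ν} (n : ℕ) {a b : NTm B} :
      NEq a b → NEq (.lam n A a) (.lam n A b)
  | beta {A B : Ty ν} (n : ℕ) (a : NTm B) (b : NTm A) :
      FreeFor b n a → NEq (.app (.lam n A a) b) (NTm.substVar b n a)
  | eta {A B : Ty ν} (n : ℕ) (a : NTm (Ty.arrow A B)) :
      ¬ Free n A a → NEq (.lam n A (.app a (.var n A))) a

lemma free_occurs {ν : Type} {n : ℕ} {A : Ty ν} : ∀ {B : Ty ν} {a : NTm B},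
    Free n A a → Occurs n A a
  | _, .var _ _, h => h
  | _, .app _ _, h => h.imp free_occurs free_occurs
  | _, .lam _ _ _, h => Or.inr (free_occurs h.2)

lemma freefor_of_not_occurs {ν : Type} {m : ℕ} {A : Ty ν} (n : ℕ) :
    ∀ {B : Ty ν} {a : NTm B}, ¬ Occurs m A a → FreeFor (NTm.var m A) n a
  | _, .var _ _, _ => trivial
  | _, .app _ _, h =>
      ⟨freefor_of_not_occurs n (fun hf => h (Or.inl hf)),
       freefor_of_not_occurs n (fun hf => h (Or.inr hf))⟩
  | _, .lam _ _ _, h =>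
      Or.inr ⟨fun hf => h (Or.inl ⟨hf.1.symm, hf.2.symm⟩), freefor_of_not_occurs n (fun hf => h (Or.inr hf))⟩

/--
In the system axiomatized by (β), (η), reflexivity and the rule of replacement of
equals (without assuming α-conversion), the equality of α-conversion is derivable: for
any term `a`, variable `x = (n, A)`, and variable `y = (m, A)` of the same type as `x`
not occurring in `a`, the equality `λx.a = λy.(a[y/x])` is provable.
-/
theorem alpha_conversion_derivable {ν : Type} [DecidableEq ν] {A B : Ty ν}
    (a : NTm B) (n m : ℕ) (hm : ¬ Occurs m A a) :
    NEq (.lam n A a) (.lam m A (NTm.substVar (.var m A) n a)) := by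

  have hnf : ¬ Free m A (NTm.lam n A a) := by
    intro hf
    exact hm (free_occurs hf.2)
  exact NEq.trans (NEq.symm (NEq.eta m _ hnf))
    (NEq.congLam m (NEq.beta n a (NTm.var m A) (freefor_of_not_occurs n hm)))
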